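/- arXiv:2207.11788 — 2 statements merged into one kernel-verified Lean document; each statement's English description precedes it below -/
import Mathlib

section
/- Let ω, b ∈ ℝ with ωb > 0, let N ≥ 1, and let x₁, …, x_N ∈ [0,1]. Define v_i := ω x_i + b for i ∈ [N]; let M be an index maximizing |v_i| and m an index minimizing |v_i| (equivalently, x_M = max_i x_i and x_m = min_i x_i). Let I := {i ∈ [N] : v_i ≠ v_m}, and for i ∈ I define α_i := (v_i − v_M)/(v_i − v_m). Define the estimates x̂_i := 1/(1 − α_i) for i ∈ I and x̂_i := 0 for i ∈ [N] \ I. Then α_i ≤ 0 for all i ∈ I, and the empirical mean square error satisfies (1/N) ∑_{i=1}^{N} (x_i − x̂_i)² ≤ (x_M − 1)² + x_m². -/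
/-!
Since `ω x` and `b` have the same sign, `|v_i| = |ω| x_i + |b|`, so `M` and `m` are the indices of
the largest and smallest `x_i`, and `ω, b` cancel from `α_i`: the estimate is the min-max rescaling
`x̂_i = (x_i − x_m)/(x_M − x_m)` (also where `v_i = v_m`, since then `x_i = x_m`).
The error `x_i − x̂_i` is affine in `x_i`, hence lies between its values `x_M − 1` at `x_M` and
`x_m` at `x_m`; its square is therefore at most `(x_M − 1)² + x_m²`, and so is the mean.
-/

open Finset

lemma abs_mul_add_of_mul_pos {w b x : ℝ} (hwb : 0 < w * b) (hx : 0 ≤ x) :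
    |w * x + b| = |w| * x + |b| := by
  rw [(abs_add_eq_add_abs_iff _ _).2 ?_, abs_mul, abs_of_nonneg hx]
  rcases mul_pos_iff.mp hwb with ⟨hw, hb⟩ | ⟨hw, hb⟩
  · exact .inl ⟨by positivity, hb.le⟩
  · exact .inr ⟨mul_nonpos_of_nonpos_of_nonneg hw.le hx, hb.le⟩

lemma le_of_abs_mul_add_le_abs {w b x y : ℝ} (hwb : 0 < w * b) (hx : 0 ≤ x) (hy : 0 ≤ y)
    (h : |w * x + b| ≤ |w * y + b|) : x ≤ y := by
  rw [abs_mul_add_of_mul_pos hwb hx, abs_mul_add_of_mul_pos hwb hy, add_le_add_iff_right] at h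
  exact le_of_mul_le_mul_left h (abs_pos.2 (left_ne_zero_of_mul hwb.ne'))

lemma one_div_one_sub_sub_div_sub {x y z : ℝ} (h : x ≠ z) :
    1 / (1 - (x - y) / (x - z)) = (x - z) / (y - z) := by
  rw [one_sub_div (sub_ne_zero.2 h), sub_sub_sub_cancel_left, one_div_div]

lemma sub_sub_div_sub_mem_Icc {x y z : ℝ} (hz : 0 ≤ z) (hy : y ≤ 1) (hzx : z ≤ x) (hxy : x ≤ y) :
    x - (x - z) / (y - z) ∈ Set.Icc (y - 1) z := by
  rcases hzx.eq_or_lt with rfl | hzx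
  · simp only [sub_self, zero_div, sub_zero, Set.mem_Icc, le_refl, and_true]
    linarith
  have hd : 0 < y - z := by linarith
  have hd1 : y - z ≤ 1 := by linarith
  have hcompl : 1 - (x - z) / (y - z) = (y - x) / (y - z) := by
    rw [one_sub_div hd.ne', sub_sub_sub_cancel_right]
  have hlow := le_div_self (sub_nonneg.2 hxy) hd hd1
  have hup := le_div_self (sub_nonneg.2 hzx.le) hd hd1
  constructor <;> linarith

lemma sq_le_sq_add_sq_of_mem_Icc {a c e : ℝ} (he : e ∈ Set.Icc a c) : e ^ 2 ≤ a ^ 2 + c ^ 2 := by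
  obtain ⟨hae, hec⟩ := he
  rcases le_total 0 e with h | h
  · nlinarith
  · nlinarith

lemma one_div_card_mul_sum_le {ι : Type*} [Fintype ι] {f : ι → ℝ} {c : ℝ} (hc : 0 ≤ c)
    (hf : ∀ i, f i ≤ c) : 1 / (Fintype.card ι : ℝ) * ∑ i, f i ≤ c := by
  rcases isEmpty_or_nonempty ι with hι | hι
  · simpa using hc
  rw [one_div, inv_mul_le_iff₀ (by positivity), ← nsmul_eq_mul]
  exact sum_le_card_nsmul _ _ _ fun i _ => hf i

theorem blackbox_same_sign_mse_bound_general
    {N : ℕ} (w b : ℝ) (hwb : 0 < w * b)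
    (x : Fin N → ℝ) (hx : ∀ i, x i ∈ Set.Icc (0 : ℝ) 1)
    (M mIdx : Fin N)
    (hM : ∀ i, |w * x i + b| ≤ |w * x M + b|)
    (hm : ∀ i, |w * x mIdx + b| ≤ |w * x i + b|) :
    (∀ i, w * x i + b ≠ w * x mIdx + b →
        ((w * x i + b) - (w * x M + b)) / ((w * x i + b) - (w * x mIdx + b)) ≤ 0) ∧
      (1 / (N : ℝ)) * ∑ i, (x i -
          (if w * x i + b ≠ w * x mIdx + b then
            1 / (1 - ((w * x i + b) - (w * x M + b)) / ((w * x i + b) - (w * x mIdx + b)))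
          else 0)) ^ 2 ≤
        (x M - 1) ^ 2 + (x mIdx) ^ 2 := by
  have hw : w ≠ 0 := left_ne_zero_of_mul hwb.ne'
  have hxM i : x i ≤ x M := le_of_abs_mul_add_le_abs hwb (hx i).1 (hx M).1 (hM i)
  have hxm i : x mIdx ≤ x i := le_of_abs_mul_add_le_abs hwb (hx mIdx).1 (hx i).1 (hm i)
  have hv i j : (w * x i + b) - (w * x j + b) = w * (x i - x j) := by ring
  have hα i : ((w * x i + b) - (w * x M + b)) / ((w * x i + b) - (w * x mIdx + b)) =
      (x i - x M) / (x i - x mIdx) := by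
    rw [hv, hv, mul_div_mul_left _ _ hw]
  have hxhat i : (if w * x i + b ≠ w * x mIdx + b then
      1 / (1 - ((w * x i + b) - (w * x M + b)) / ((w * x i + b) - (w * x mIdx + b)))
      else 0) = (x i - x mIdx) / (x M - x mIdx) := by
    split_ifs with hi
    · exact (hα i).symm ▸ one_div_one_sub_sub_div_sub fun h => hi (by rw [h])
    · rw [mul_left_cancel₀ hw (add_right_cancel (not_not.1 hi)), sub_self, zero_div]
  refine ⟨fun i _ => (hα i).symm ▸ div_nonpos_of_nonpos_of_nonneg
    (sub_nonpos.2 (hxM i)) (sub_nonneg.2 (hxm i)), ?_⟩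
  simp only [hxhat]
  simpa only [Fintype.card_fin] using one_div_card_mul_sum_le (by positivity) fun i =>
    sq_le_sq_add_sq_of_mem_Icc (sub_sub_div_sub_mem_Icc (hx mIdx).1 (hx M).2 (hxm i) (hxM i))

/-- Black-box attack with one feature, same-sign parameters (`ωb > 0`): with
`v_i = ω x_i + b`, `M` maximizing `|v_i|`, `m` minimizing `|v_i|`,
`α_i = (v_i − v_M)/(v_i − v_m)` for `v_i ≠ v_m`, and estimates `x̂_i = 1/(1 − α_i)`
(`x̂_i = 0` for `v_i = v_m`): every `α_i ≤ 0` and the empirical MSE satisfies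
`(1/N) ∑ (x_i − x̂_i)² ≤ (x_M − 1)² + x_m²`. -/
theorem blackbox_same_sign_mse_bound
    {N : ℕ} (hN : 1 ≤ N) (w b : ℝ) (hwb : 0 < w * b)
    (x : Fin N → ℝ) (hx : ∀ i, x i ∈ Set.Icc (0 : ℝ) 1)
    (M mIdx : Fin N)
    (hM : ∀ i, |w * x i + b| ≤ |w * x M + b|)
    (hm : ∀ i, |w * x mIdx + b| ≤ |w * x i + b|) :
    (∀ i, w * x i + b ≠ w * x mIdx + b →
        ((w * x i + b) - (w * x M + b)) / ((w * x i + b) - (w * x mIdx + b)) ≤ 0) ∧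
      (1 / (N : ℝ)) * ∑ i, (x i -
          (if w * x i + b ≠ w * x mIdx + b then
            1 / (1 - ((w * x i + b) - (w * x M + b)) / ((w * x i + b) - (w * x mIdx + b)))
          else 0)) ^ 2 ≤
        (x M - 1) ^ 2 + (x mIdx) ^ 2 :=
  blackbox_same_sign_mse_bound_general w b hwb x hx M mIdx hM hm
end

section
/- Let M ∈ ℝ^{d×d}. Then for every orthonormal matrix H ∈ ℝ^{d×d} (HᵀH = I_d), Tr(H M) ≥ −‖M‖_*, where ‖M‖_* = Tr(√(MᵀM)) is the nuclear norm of M (the sum of its singular values); moreover, if M = U S Vᵀ is a singular value decomposition of M, then H* := −V Uᵀ is orthonormal and achieves equality: Tr(H* M) = −‖M‖_*. Consequently, for a Moore–Penrose pseudoinverse B of A ∈ ℝ^{m×d} and a random vector X with correlation matrix K₀ = E[XXᵀ], the maximum over orthonormal H of E[‖X − HBAX‖²] equals Tr((I_d + BA) K₀) + 2 ‖BA K₀‖_*, attained at H = −VUᵀ for an SVD U S Vᵀ of BA K₀. -/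
open MeasureTheory Matrix

/-- The positive semidefinite square root, as `Matrix.PosSemidef.sqrt` was defined in
Mathlib (December 2024); it has since been removed from Mathlib. -/
noncomputable def Matrix.PosSemidef.sqrt {n 𝕜 : Type*} [Fintype n] [RCLike 𝕜] [PartialOrder 𝕜]
    [StarOrderedRing 𝕜] [DecidableEq n]
    {A : Matrix n n 𝕜} (hA : A.PosSemidef) : Matrix n n 𝕜 :=
  hA.1.eigenvectorUnitary.1 * diagonal ((↑) ∘ (√·) ∘ hA.1.eigenvalues) *
  (star hA.1.eigenvectorUnitary : Matrix n n 𝕜)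

/-- The nuclear norm `‖M‖_* = Tr(√(MᴴM))` of a real square matrix (the sum of its
singular values); over `ℝ`, `Mᴴ = Mᵀ`. -/
noncomputable def nuclearNorm {d : ℕ} (M : Matrix (Fin d) (Fin d) ℝ) : ℝ :=
  (Matrix.posSemidef_conjTranspose_mul_self M).sqrt.trace

/-!
Let `w₁, …, w_d` be an orthonormal eigenbasis of `MᵀM`, with eigenvalues `λᵢ`. Then
`Tr(HM) = ∑ ⟪wᵢ, HMwᵢ⟫`, and by Cauchy–Schwarz each term is at least
`-‖HMwᵢ‖ = -‖Mwᵢ‖ = -√λᵢ`, so `Tr(HM) ≥ -‖M‖_*`. For an SVD `M = USVᵀ`, uniqueness of positive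
square roots gives `√(MᵀM) = VSVᵀ`, hence `‖M‖_* = ∑ sᵢ = Tr(VUᵀM)`.

The Moore–Penrose identities make `P = BA` a symmetric idempotent, so for orthonormal `H`,
`(I - HP)ᵀ(I - HP) = I + P - HP - (HP)ᵀ` and `E‖(I - HP)X‖² = Tr((I + P)K₀) - 2 Tr(H · PK₀)`:
maximising the error is minimising `Tr(H · PK₀)`.
-/

namespace Matrix

namespace PosSemidef

open scoped ComplexOrder MatrixOrder

variable {n 𝕜 : Type*} [Fintype n] [RCLike 𝕜] [DecidableEq n] {A : Matrix n n 𝕜}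

lemma sqrt_eq_cfcSqrt (hA : A.PosSemidef) : hA.sqrt = CFC.sqrt A := by
  rw [CFC.sqrt_eq_real_sqrt A hA.nonneg, cfcₙ_eq_cfc, hA.1.cfc_eq]
  rfl

lemma sqrt_eq_of_mul_self_eq {B : Matrix n n 𝕜} (hA : A.PosSemidef) (hB : B.PosSemidef)
    (h : B * B = A) : hA.sqrt = B := by
  rw [sqrt_eq_cfcSqrt, CFC.sqrt_eq_iff A B hA.nonneg hB.nonneg]
  exact h

lemma trace_sqrt (hA : A.PosSemidef) :
    hA.sqrt.trace = ∑ i, ((√(hA.1.eigenvalues i) : ℝ) : 𝕜) := by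
  rw [sqrt, trace_mul_cycle, Unitary.coe_star_mul_self, one_mul, trace_diagonal]
  rfl

end PosSemidef

lemma trace_eq_sum_star_dotProduct_mulVec {n 𝕜 : Type*} [Fintype n] [DecidableEq n] [RCLike 𝕜]
    (Z : Matrix n n 𝕜) (b : OrthonormalBasis n 𝕜 (EuclideanSpace 𝕜 n)) :
    Z.trace = ∑ i, star ⇑(b i) ⬝ᵥ (Z *ᵥ ⇑(b i)) := by
  have h := LinearMap.trace_eq_sum_inner (toLpLin 2 2 Z) b
  rw [toLpLin_eq_toLin, LinearMap.trace_eq_matrix_trace 𝕜 (PiLp.basisFun 2 𝕜 n),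
    LinearMap.toMatrix_toLin, ← toLpLin_eq_toLin] at h
  rw [h]
  refine Finset.sum_congr rfl fun i _ => ?_
  rw [EuclideanSpace.inner_eq_star_dotProduct, toLpLin_apply, dotProduct_comm]

lemma neg_sqrt_le_dotProduct {n : Type*} [Fintype n] {w : n → ℝ} (hw : w ⬝ᵥ w = 1) (v : n → ℝ) :
    -√(v ⬝ᵥ v) ≤ w ⬝ᵥ v := by
  have h : -(w ⬝ᵥ v) ≤ √(w ⬝ᵥ w) * √(v ⬝ᵥ v) := by
    simpa [dotProduct, sq] using Real.sum_mul_le_sqrt_mul_sqrt Finset.univ (-w) v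
  rw [hw, Real.sqrt_one, one_mul] at h
  linarith

section CommRing

variable {n R : Type*} [Fintype n] [CommRing R]

lemma mulVec_dotProduct_mulVec_self (M : Matrix n n R) (v : n → R) :
    (M *ᵥ v) ⬝ᵥ (M *ᵥ v) = v ⬝ᵥ ((Mᵀ * M) *ᵥ v) := by
  rw [← mulVec_mulVec, dotProduct_mulVec v, vecMul_transpose, dotProduct_comm]

lemma trace_transpose_mul_of_transpose_eq (A : Matrix n n R) {K : Matrix n n R} (hK : Kᵀ = K) :
    (Aᵀ * K).trace = (A * K).trace := by
  rw [← trace_transpose, transpose_mul, transpose_transpose, hK, trace_mul_comm]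

variable [DecidableEq n]

lemma mulVec_dotProduct_mulVec_of_transpose_mul_self_eq_one {H : Matrix n n R}
    (hH : Hᵀ * H = 1) (v : n → R) : (H *ᵥ v) ⬝ᵥ (H *ᵥ v) = v ⬝ᵥ v := by
  rw [mulVec_dotProduct_mulVec_self, hH, one_mulVec]

lemma trace_mul_transpose_mul_diagonal_mul_transpose {U V : Matrix n n R} (hU : Uᵀ * U = 1)
    (hV : Vᵀ * V = 1) (s : n → R) : (V * Uᵀ * (U * diagonal s * Vᵀ)).trace = ∑ i, s i := by
  rw [Matrix.mul_assoc, ← Matrix.mul_assoc Uᵀ, ← Matrix.mul_assoc Uᵀ, hU, Matrix.one_mul,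
    trace_mul_comm, Matrix.mul_assoc, hV, Matrix.mul_one, trace_diagonal]

lemma transpose_mul_self_neg_mul_transpose {U V : Matrix n n R} (hU : Uᵀ * U = 1)
    (hV : Vᵀ * V = 1) : (-(V * Uᵀ))ᵀ * (-(V * Uᵀ)) = 1 := by
  rw [transpose_neg, neg_mul_neg, transpose_mul, transpose_transpose, Matrix.mul_assoc,
    ← Matrix.mul_assoc Vᵀ, hV, Matrix.one_mul, mul_eq_one_comm.mp hU]

lemma transpose_mul_self_one_sub_mul {H P : Matrix n n R} (hH : Hᵀ * H = 1) (hP : Pᵀ = P)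
    (hPP : P * P = P) : (1 - H * P)ᵀ * (1 - H * P) = 1 + P - H * P - (H * P)ᵀ := by
  have hquad : (H * P)ᵀ * (H * P) = P := by
    rw [transpose_mul, Matrix.mul_assoc, ← Matrix.mul_assoc Hᵀ, hH, Matrix.one_mul, hP, hPP]
  rw [transpose_sub, transpose_one, sub_mul, mul_sub, mul_sub, hquad]
  simp only [Matrix.one_mul, Matrix.mul_one]
  abel

end CommRing

end Matrix

section NuclearNorm

variable {d : ℕ}

lemma nuclearNorm_eq_sum_sqrt_eigenvalues (M : Matrix (Fin d) (Fin d) ℝ) :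
    nuclearNorm M = ∑ i, √((posSemidef_conjTranspose_mul_self M).1.eigenvalues i) :=
  (posSemidef_conjTranspose_mul_self M).trace_sqrt

theorem neg_nuclearNorm_le_trace_mul (M : Matrix (Fin d) (Fin d) ℝ)
    {H : Matrix (Fin d) (Fin d) ℝ} (hH : Hᵀ * H = 1) : -nuclearNorm M ≤ (H * M).trace := by
  set hM := (posSemidef_conjTranspose_mul_self M).1
  set b := hM.eigenvectorBasis
  rw [nuclearNorm_eq_sum_sqrt_eigenvalues, trace_eq_sum_star_dotProduct_mulVec _ b,
    ← Finset.sum_neg_distrib]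
  gcongr with i
  have hb : ⇑(b i) ⬝ᵥ ⇑(b i) = 1 := by
    have h := real_inner_self_eq_norm_sq (b i)
    rwa [EuclideanSpace.inner_eq_star_dotProduct, star_trivial, b.orthonormal.1 i, one_pow] at h
  have heig : hM.eigenvalues i = (M *ᵥ ⇑(b i)) ⬝ᵥ (M *ᵥ ⇑(b i)) := by
    rw [mulVec_dotProduct_mulVec_self, ← conjTranspose_eq_transpose_of_trivial,
      hM.mulVec_eigenvectorBasis, dotProduct_smul, hb, smul_eq_mul, mul_one]
  rw [star_trivial, heig, ← mulVec_dotProduct_mulVec_of_transpose_mul_self_eq_one hH,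
    mulVec_mulVec]
  exact neg_sqrt_le_dotProduct hb _

lemma nuclearNorm_mul_diagonal_mul_transpose {U V : Matrix (Fin d) (Fin d) ℝ} {s : Fin d → ℝ}
    (hU : Uᵀ * U = 1) (hV : Vᵀ * V = 1) (hs : 0 ≤ s) :
    nuclearNorm (U * diagonal s * Vᵀ) = ∑ i, s i := by
  have hP : (V * diagonal s * Vᵀ).PosSemidef := by
    simpa using (PosSemidef.diagonal hs).mul_mul_conjTranspose_same V
  rw [nuclearNorm, PosSemidef.sqrt_eq_of_mul_self_eq _ hP, trace_mul_cycle, hV, Matrix.one_mul,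
    trace_diagonal]
  simp only [conjTranspose_eq_transpose_of_trivial, transpose_mul, diagonal_transpose,
    transpose_transpose, Matrix.mul_assoc]
  rw [← Matrix.mul_assoc Vᵀ V, hV, ← Matrix.mul_assoc Uᵀ U, hU]

theorem trace_neg_mul_transpose_eq_neg_nuclearNorm {U V : Matrix (Fin d) (Fin d) ℝ}
    {s : Fin d → ℝ} (hU : Uᵀ * U = 1) (hV : Vᵀ * V = 1) (hs : 0 ≤ s) :
    (-(V * Uᵀ) * (U * diagonal s * Vᵀ)).trace = -nuclearNorm (U * diagonal s * Vᵀ) := by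
  rw [neg_mul, trace_neg, trace_mul_transpose_mul_diagonal_mul_transpose hU hV,
    nuclearNorm_mul_diagonal_mul_transpose hU hV hs]

end NuclearNorm

section SecondMoment

variable {Ω n : Type*} [MeasurableSpace Ω] {μ : Measure Ω}

noncomputable def secondMomentMatrix (X : Ω → n → ℝ) (μ : Measure Ω) : Matrix n n ℝ :=
  Matrix.of fun i j => ∫ ω, X ω i * X ω j ∂μ

lemma secondMomentMatrix_transpose (X : Ω → n → ℝ) (μ : Measure Ω) :
    (secondMomentMatrix X μ)ᵀ = secondMomentMatrix X μ := by
  ext i j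
  simp only [secondMomentMatrix, transpose_apply, of_apply, mul_comm]

variable [Fintype n] {X : Ω → n → ℝ}

lemma integral_dotProduct_mulVec (hX : ∀ i, MemLp (fun ω => X ω i) 2 μ) (P : Matrix n n ℝ) :
    ∫ ω, X ω ⬝ᵥ (P *ᵥ X ω) ∂μ = (P * secondMomentMatrix X μ).trace := by
  have hint (j k : n) : Integrable (fun ω => P j k * (X ω k * X ω j)) μ :=
    ((hX k).integrable_mul (hX j)).const_mul _
  have hpt (x : n → ℝ) : x ⬝ᵥ (P *ᵥ x) = ∑ j, ∑ k, P j k * (x k * x j) := by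
    simp only [dotProduct, mulVec, Finset.mul_sum]
    exact Fintype.sum_congr _ _ fun j => Fintype.sum_congr _ _ fun k => by ring
  simp only [hpt, trace, diag_apply, mul_apply, secondMomentMatrix, of_apply]
  rw [integral_finsetSum _ fun j _ => integrable_finsetSum _ fun k _ => hint j k]
  refine Fintype.sum_congr _ _ fun j => ?_
  rw [integral_finsetSum _ fun k _ => hint j k]
  exact Fintype.sum_congr _ _ fun k => integral_const_mul _ _

variable [DecidableEq n]

lemma integral_sum_sq_sub_mulVec (hX : ∀ i, MemLp (fun ω => X ω i) 2 μ) (G : Matrix n n ℝ) :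
    ∫ ω, ∑ i, (X ω i - (G *ᵥ X ω) i) ^ 2 ∂μ =
      ((1 - G)ᵀ * (1 - G) * secondMomentMatrix X μ).trace := by
  have hpt (x : n → ℝ) : ∑ i, (x i - (G *ᵥ x) i) ^ 2 = x ⬝ᵥ (((1 - G)ᵀ * (1 - G)) *ᵥ x) := by
    rw [← mulVec_dotProduct_mulVec_self, sub_mulVec, one_mulVec]
    simp only [dotProduct, sq, Pi.sub_apply]
  simp only [hpt]
  exact integral_dotProduct_mulVec hX _

theorem integral_sum_sq_sub_mul_mulVec (hX : ∀ i, MemLp (fun ω => X ω i) 2 μ)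
    {H P : Matrix n n ℝ} (hH : Hᵀ * H = 1) (hP : Pᵀ = P) (hPP : P * P = P) :
    ∫ ω, ∑ i, (X ω i - ((H * P) *ᵥ X ω) i) ^ 2 ∂μ =
      ((1 + P) * secondMomentMatrix X μ).trace - 2 * (H * (P * secondMomentMatrix X μ)).trace := by
  rw [integral_sum_sq_sub_mulVec hX, transpose_mul_self_one_sub_mul hH hP hPP, sub_mul, sub_mul,
    trace_sub, trace_sub,
    trace_transpose_mul_of_transpose_eq _ (secondMomentMatrix_transpose X μ), Matrix.mul_assoc]
  ring

end SecondMoment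

theorem pps_optimal_orthonormal_transform_general
    {m d : ℕ} (A : Matrix (Fin m) (Fin d) ℝ) (B : Matrix (Fin d) (Fin m) ℝ)
    (h1 : A * B * A = A)
    (h4 : (B * A)ᵀ = B * A)
    {Ω : Type*} [MeasureSpace Ω]
    (X : Ω → Fin d → ℝ)
    (hL2 : ∀ i, MemLp (fun ω => X ω i) 2)
    (K₀ : Matrix (Fin d) (Fin d) ℝ)
    (hK₀ : K₀ = Matrix.of fun i j => ∫ ω, X ω i * X ω j) :
    (∀ M : Matrix (Fin d) (Fin d) ℝ,
        (∀ H : Matrix (Fin d) (Fin d) ℝ, Hᵀ * H = 1 →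
          -(nuclearNorm M) ≤ Matrix.trace (H * M)) ∧
        (∀ (U V : Matrix (Fin d) (Fin d) ℝ) (s : Fin d → ℝ),
          Uᵀ * U = 1 → Vᵀ * V = 1 → (∀ i, 0 ≤ s i) →
          M = U * Matrix.diagonal s * Vᵀ →
            (-(V * Uᵀ))ᵀ * (-(V * Uᵀ)) = 1 ∧
            Matrix.trace ((-(V * Uᵀ)) * M) = -(nuclearNorm M))) ∧
      (∀ H : Matrix (Fin d) (Fin d) ℝ, Hᵀ * H = 1 →
        (∫ ω, ∑ i, (X ω i - ((H * (B * A)) *ᵥ X ω) i) ^ 2) ≤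
          Matrix.trace ((1 + B * A) * K₀) + 2 * nuclearNorm (B * A * K₀)) ∧
      ∀ (U V : Matrix (Fin d) (Fin d) ℝ) (s : Fin d → ℝ),
        Uᵀ * U = 1 → Vᵀ * V = 1 → (∀ i, 0 ≤ s i) →
        B * A * K₀ = U * Matrix.diagonal s * Vᵀ →
          (∫ ω, ∑ i, (X ω i - (((-(V * Uᵀ)) * (B * A)) *ᵥ X ω) i) ^ 2) =
            Matrix.trace ((1 + B * A) * K₀) + 2 * nuclearNorm (B * A * K₀) := by
  obtain rfl : K₀ = secondMomentMatrix X volume := hK₀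
  have hidem : B * A * (B * A) = B * A := by
    rw [Matrix.mul_assoc, ← Matrix.mul_assoc A, h1]
  refine ⟨fun M => ⟨fun H hH => neg_nuclearNorm_le_trace_mul M hH, ?_⟩, fun H hH => ?_, ?_⟩
  · rintro U V s hU hV hs rfl
    exact ⟨transpose_mul_self_neg_mul_transpose hU hV,
      trace_neg_mul_transpose_eq_neg_nuclearNorm hU hV hs⟩
  · rw [integral_sum_sq_sub_mul_mulVec hL2 hH h4 hidem]
    linarith [neg_nuclearNorm_le_trace_mul (B * A * secondMomentMatrix X volume) hH]
  · intro U V s hU hV hs hsvd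
    rw [integral_sum_sq_sub_mul_mulVec hL2 (transpose_mul_self_neg_mul_transpose hU hV) h4 hidem,
      hsvd, trace_neg_mul_transpose_eq_neg_nuclearNorm hU hV hs]
    ring

/-- For every orthonormal `H`, `Tr(HM) ≥ −‖M‖_*`, with equality at `H* = −VUᵀ` for an
SVD `M = USVᵀ`. Consequently, the maximum over orthonormal `H` of the post-PPS
least-squares MSE `E‖X − HBAX‖²` equals `Tr((I + BA)K₀) + 2‖BAK₀‖_*`, attained at
`H = −VUᵀ` for an SVD `USVᵀ` of `BAK₀`. -/
theorem pps_optimal_orthonormal_transform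
    {m d : ℕ} (A : Matrix (Fin m) (Fin d) ℝ) (B : Matrix (Fin d) (Fin m) ℝ)
    (h1 : A * B * A = A) (h2 : B * A * B = B)
    (h3 : (A * B)ᵀ = A * B) (h4 : (B * A)ᵀ = B * A)
    {Ω : Type*} [MeasureSpace Ω] [IsProbabilityMeasure (volume : Measure Ω)]
    (X : Ω → Fin d → ℝ) (hXmeas : Measurable X)
    (hL2 : ∀ i, MemLp (fun ω => X ω i) 2)
    (K₀ : Matrix (Fin d) (Fin d) ℝ)
    (hK₀ : K₀ = Matrix.of fun i j => ∫ ω, X ω i * X ω j) :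
    (∀ M : Matrix (Fin d) (Fin d) ℝ,
        (∀ H : Matrix (Fin d) (Fin d) ℝ, Hᵀ * H = 1 →
          -(nuclearNorm M) ≤ Matrix.trace (H * M)) ∧
        (∀ (U V : Matrix (Fin d) (Fin d) ℝ) (s : Fin d → ℝ),
          Uᵀ * U = 1 → Vᵀ * V = 1 → (∀ i, 0 ≤ s i) →
          M = U * Matrix.diagonal s * Vᵀ →
            (-(V * Uᵀ))ᵀ * (-(V * Uᵀ)) = 1 ∧
            Matrix.trace ((-(V * Uᵀ)) * M) = -(nuclearNorm M))) ∧
      (∀ H : Matrix (Fin d) (Fin d) ℝ, Hᵀ * H = 1 →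
        (∫ ω, ∑ i, (X ω i - ((H * (B * A)) *ᵥ X ω) i) ^ 2) ≤
          Matrix.trace ((1 + B * A) * K₀) + 2 * nuclearNorm (B * A * K₀)) ∧
      ∀ (U V : Matrix (Fin d) (Fin d) ℝ) (s : Fin d → ℝ),
        Uᵀ * U = 1 → Vᵀ * V = 1 → (∀ i, 0 ≤ s i) →
        B * A * K₀ = U * Matrix.diagonal s * Vᵀ →
          (∫ ω, ∑ i, (X ω i - (((-(V * Uᵀ)) * (B * A)) *ᵥ X ω) i) ^ 2) =
            Matrix.trace ((1 + B * A) * K₀) + 2 * nuclearNorm (B * A * K₀) :=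
  pps_optimal_orthonormal_transform_general A B h1 h4 X hL2 K₀ hK₀
end
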